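/- Let (R, m) be a Henselian local ring with finite residue field of cardinality q and π(x) any π-polynomial. If Z(m) is generated as an ideal of R[x] by F₁(x), ..., Fₙ(x), then Z(R) is generated by F₁(π(x)), ..., Fₙ(π(x)). -/

import Mathlib

open Polynomial IsLocalRing

/-- The ideal of polynomials in `R[X]` mapping every element of `S` into the ideal `I`. -/
def zeroFunctionsInto {R : Type*} [CommRing R] (S : Set R) (I : Ideal R) : Ideal R[X] where
  carrier := {f | ∀ s ∈ S, f.eval s ∈ I}
  add_mem' := fun hf hg s hs => by simpa using I.add_mem (hf s hs) (hg s hs)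
  zero_mem' := fun s _ => by simp
  smul_mem' := fun c f hf s hs => by simpa using I.mul_mem_left (c.eval s) (hf s hs)

/-- The ideal of polynomials vanishing on the subset `S`. -/
def zeroFunctions {R : Type*} [CommRing R] (S : Set R) : Ideal R[X] :=
  zeroFunctionsInto S ⊥

/-! Write `π = nodal univ c`. Every element of `R` is congruent to some `cᵢ`, so `π` maps `R`
into `m` and each `Fᵢ ∘ π` vanishes on `R`. Conversely, dividing repeatedly by the monic `π`
writes any `f` as `∑_{j<q} gⱼ(π) xʲ`. For `t ∈ m`, Hensel's lemma lifts each `cᵢ` to a root `rᵢ`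
of `π(x) = t`; the `rᵢ` are pairwise incongruent mod `m`, so their Vandermonde matrix is
invertible. If `f` vanishes on `R`, then `∑ⱼ rᵢʲ gⱼ(t) = 0` for all `i`, hence every `gⱼ`
vanishes on `m`, i.e. lies in `(F₁, …, Fₙ)`, and `f` lies in the ideal generated by the
`Fᵢ ∘ π`. -/

open Finset Lagrange

theorem mem_zeroFunctions_iff {R : Type*} [CommRing R] {S : Set R} {f : R[X]} :
    f ∈ zeroFunctions S ↔ ∀ s ∈ S, f.eval s = 0 :=
  forall₂_congr fun _ _ => Ideal.mem_bot

namespace Polynomial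

variable {R : Type*} [CommRing R]

theorem exists_eq_sum_comp_mul_X_pow {p : R[X]} (hp : p.Monic) {d : ℕ} (hd : p.natDegree = d)
    (hd0 : 0 < d) (f : R[X]) : ∃ g : Fin d → R[X], f = ∑ j, (g j).comp p * X ^ (j : ℕ) := by
  subst hd
  have : Nontrivial R :=
    Nontrivial.of_polynomial_ne (p := p) (q := 0) (by rintro rfl; simp at hd0)
  induction hn : f.natDegree using Nat.strong_induction_on generalizing f with
  | _ n ih =>
  obtain ⟨g, hg⟩ : ∃ g : Fin p.natDegree → R[X],
      f /ₘ p = ∑ j, (g j).comp p * X ^ (j : ℕ) := by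
    by_cases h0 : f /ₘ p = 0
    · exact ⟨0, by simp [h0]⟩
    · have hpf : p.natDegree ≤ n :=
        hn ▸ natDegree_le_natDegree (not_lt.mp ((divByMonic_eq_zero_iff hp).not.mp h0))
      exact ih _ (by rw [natDegree_divByMonic f hp]; omega) _ rfl
  have hr : (f %ₘ p).degree < p.natDegree :=
    degree_eq_natDegree hp.ne_zero ▸ degree_modByMonic_lt f hp
  refine ⟨fun j => X * g j + C ((f %ₘ p).coeff j), ?_⟩
  calc f = f %ₘ p + p * (f /ₘ p) := (modByMonic_add_div f p).symm
    _ = ∑ j : Fin _, C ((f %ₘ p).coeff j) * X ^ (j : ℕ) +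
          p * ∑ j, (g j).comp p * X ^ (j : ℕ) := by
      rw [← hg, sum_fin (fun n a => C a * X ^ n) (by simp) hr, sum_C_mul_X_pow_eq]
    _ = _ := by
      simp only [add_comp, mul_comp, X_comp, C_comp, mul_sum, ← sum_add_distrib]
      exact sum_congr rfl fun j _ => by ring

theorem comp_mem_span_range_comp {ι : Type*} {F : ι → R[X]} {g : R[X]}
    (hg : g ∈ Ideal.span (Set.range F)) (p : R[X]) :
    g.comp p ∈ Ideal.span (Set.range fun i => (F i).comp p) := by
  have := Ideal.mem_map_of_mem (compRingHom p) hg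
  rwa [Ideal.map_span, ← Set.range_comp] at this

end Polynomial

namespace IsLocalRing

variable {R : Type*} [CommRing R] [IsLocalRing R]

theorem isUnit_det_vandermonde {n : ℕ} {r : Fin n → R}
    (hr : Function.Injective (residue R ∘ r)) :
    IsUnit (Matrix.vandermonde r).det := by
  rw [← residue_ne_zero_iff_isUnit, Matrix.det_vandermonde, map_prod]
  refine prod_ne_zero_iff.mpr fun i _ => ?_
  rw [map_prod]
  refine prod_ne_zero_iff.mpr fun j hj => ?_
  rw [map_sub, sub_ne_zero]
  exact hr.ne (mem_Ioi.mp hj).ne'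

theorem eq_zero_of_forall_sum_pow_mul_eq_zero {n : ℕ} {r : Fin n → R}
    (hr : Function.Injective (residue R ∘ r)) {v : Fin n → R}
    (hv : ∀ i, ∑ j : Fin n, r i ^ (j : ℕ) * v j = 0) : v = 0 := by
  refine Matrix.mulVec_injective_of_isUnit
    ((Matrix.isUnit_iff_isUnit_det _).mpr (isUnit_det_vandermonde hr)) ?_
  ext i
  simpa [Matrix.mulVec, dotProduct, Matrix.vandermonde] using hv i

theorem eval_nodal_mem_maximalIdeal {ι : Type*} [Fintype ι] {c : ι → R}
    (hc : Function.Surjective (residue R ∘ c)) (r : R) :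
    (nodal univ c).eval r ∈ maximalIdeal R := by
  obtain ⟨i, hi⟩ := hc (residue R r)
  rw [← residue_eq_zero_iff, eval_nodal, map_prod]
  exact prod_eq_zero (mem_univ i) (by simp [← hi])

end IsLocalRing

namespace HenselianLocalRing

variable {R : Type*} [CommRing R] [HenselianLocalRing R]

theorem exists_eval_nodal_eq {ι : Type*} [Fintype ι] {c : ι → R}
    (hc : Function.Injective (residue R ∘ c)) (i : ι) {t : R} (ht : t ∈ maximalIdeal R) :
    ∃ r, (nodal univ c).eval r = t ∧ residue R r = residue R (c i) := by
  classical
  have hmonic : (nodal univ c - C t).Monic := by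
    refine nodal_monic.sub_of_left (degree_C_le.trans_lt ?_)
    simpa using Fintype.card_pos_iff.mpr ⟨i⟩
  have heval : (nodal univ c - C t).eval (c i) ∈ maximalIdeal R := by
    simpa [eval_nodal_at_node (mem_univ i)] using ht
  have hderiv : IsUnit ((nodal univ c - C t).derivative.eval (c i)) := by
    rw [derivative_sub, derivative_C, sub_zero,
      eval_nodal_derivative_eval_node_eq (mem_univ i), eval_nodal,
      ← residue_ne_zero_iff_isUnit, map_prod]
    refine prod_ne_zero_iff.mpr fun j hj => ?_
    rw [map_sub, sub_ne_zero]
    exact hc.ne (ne_of_mem_erase hj).symm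
  obtain ⟨r, hroot, hr⟩ := is_henselian _ hmonic _ heval hderiv
  exact ⟨r, by simpa [sub_eq_zero] using hroot, Ideal.Quotient.eq.mpr hr⟩

theorem mem_zeroFunctions_maximalIdeal_of_sum_comp_nodal {q : ℕ} {c : Fin q → R}
    (hc : Function.Injective (residue R ∘ c)) {g : Fin q → R[X]}
    (hf : ∑ j, (g j).comp (nodal univ c) * X ^ (j : ℕ) ∈ zeroFunctions Set.univ) (j : Fin q) :
    g j ∈ zeroFunctions (maximalIdeal R : Set R) := by
  refine mem_zeroFunctions_iff.mpr fun t ht => ?_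
  choose r hrt hrc using fun i => exists_eval_nodal_eq hc i ht
  have hr : Function.Injective (residue R ∘ r) := fun i i' h => hc (by simpa [hrc] using h)
  refine congrFun (eq_zero_of_forall_sum_pow_mul_eq_zero (v := fun k => (g k).eval t) hr
    fun i => ?_) j
  have := mem_zeroFunctions_iff.mp hf (r i) (Set.mem_univ _)
  simpa [eval_finsetSum, hrt, mul_comm] using this

end HenselianLocalRing

theorem statement_16 {R : Type*} [CommRing R] [HenselianLocalRing R]
    (q : ℕ) (c : Fin q → R) (hc : Function.Bijective (fun i => residue R (c i)))
    (n : ℕ) (F : Fin n → R[X])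
    (hF : zeroFunctions (maximalIdeal R : Set R) = Ideal.span (Set.range F)) :
    zeroFunctions (Set.univ : Set R) =
      Ideal.span (Set.range fun i => (F i).comp (∏ i, (X - C (c i)))) := by
  rw [← nodal_eq]
  obtain ⟨i₀, -⟩ := hc.surjective 0
  apply le_antisymm
  · intro f hf
    obtain ⟨g, rfl⟩ :=
      exists_eq_sum_comp_mul_X_pow (nodal_monic (s := univ) (v := c)) (by simp) i₀.pos f
    refine Ideal.sum_mem _ fun j _ => Ideal.mul_mem_right _ _ (comp_mem_span_range_comp ?_ _)
    exact hF ▸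
      HenselianLocalRing.mem_zeroFunctions_maximalIdeal_of_sum_comp_nodal hc.injective hf j
  · refine Ideal.span_le.mpr ?_
    rintro _ ⟨i, rfl⟩
    refine mem_zeroFunctions_iff.mpr fun s _ => ?_
    rw [eval_comp]
    exact mem_zeroFunctions_iff.mp (hF ▸ Ideal.subset_span ⟨i, rfl⟩) _
      (eval_nodal_mem_maximalIdeal hc.surjective s)
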